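/- Fix n ≥ 1 and let J : ℝⁿ × ℝⁿ → ℝⁿ × ℝⁿ be the standard linear complex structure J(x,y) = (−y, x). Let H, F : ℝⁿ × ℝⁿ → ℝ be smooth, let α ≥ 0, and suppose x₀ is a critical point of H, i.e. ∇H(x₀) = 0. Then the constant loop v(t) = x₀ is spacelike (1 + α·(d/dt)(F(v(t))) = 1 > 0) and is a critical point of the action A_α(w) = (1/2)∫₀¹ ⟨J w(t), w'(t)⟩ dt − ∫₀¹ H(w(t + αF(w(t)))) dt, i.e. (d/ds)|_{s=0} A_α(v + sη) = 0 for every smooth 1-periodic η : ℝ → ℝⁿ × ℝⁿ. -/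

import Mathlib

/-- The phase space `ℝⁿ × ℝⁿ` with its standard (L²) inner product. -/
noncomputable abbrev Phase (n : ℕ) : Type :=
  WithLp 2 (EuclideanSpace ℝ (Fin n) × EuclideanSpace ℝ (Fin n))

/-- The standard linear complex structure `J(x,y) = (-y, x)`. -/
noncomputable def Jstd (n : ℕ) (p : Phase n) : Phase n :=
  WithLp.toLp 2 (-(WithLp.ofLp p).2, (WithLp.ofLp p).1)

/-- The retarded Hamiltonian action functional
`A_α(w) = (1/2)∫₀¹ ⟨J w(t), w'(t)⟩ dt − ∫₀¹ H(w(t + αF(w(t)))) dt`. -/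
noncomputable def actionA (n : ℕ) (α : ℝ) (H F : Phase n → ℝ) (w : ℝ → Phase n) : ℝ :=
  (1 / 2) * (∫ t in (0:ℝ)..1, (inner ℝ (Jstd n (w t)) (deriv w t) : ℝ)) -
    ∫ t in (0:ℝ)..1, H (w (t + α * F (w t)))

/-- `Jstd` as a continuous linear map. -/
noncomputable def JL (n : ℕ) : Phase n →L[ℝ] Phase n :=
  (WithLp.prodContinuousLinearEquiv 2 ℝ _ _).symm.toContinuousLinearMap ∘L
    ((-(ContinuousLinearMap.snd ℝ _ _)).prod (ContinuousLinearMap.fst ℝ _ _)) ∘L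
    (WithLp.prodContinuousLinearEquiv 2 ℝ _ _).toContinuousLinearMap

lemma Jstd_eq (n : ℕ) (p : Phase n) : Jstd n p = JL n p := rfl

set_option maxHeartbeats 1000000 in
/-- Corollary to Proposition `del1` of the paper on `(ℝ²ⁿ, ω₀)`:
every critical point `x₀` of `H`, interpreted as a constant loop, is a spacelike
critical point of the retarded action `A_α`. -/
theorem statement4 (n : ℕ) (hn : 1 ≤ n) (H F : Phase n → ℝ)
    (hH : ContDiff ℝ (⊤ : ℕ∞) H) (hF : ContDiff ℝ (⊤ : ℕ∞) F) (α : ℝ) (hα : 0 ≤ α)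
    (x₀ : Phase n) (hx₀ : gradient H x₀ = 0) :
    (∀ t : ℝ, 1 + α * deriv (fun s : ℝ => F ((fun _ : ℝ => x₀) s)) t = 1 ∧
        0 < 1 + α * deriv (fun s : ℝ => F ((fun _ : ℝ => x₀) s)) t) ∧
      (∀ η : ℝ → Phase n, ContDiff ℝ (⊤ : ℕ∞) η → (∀ t : ℝ, η (t + 1) = η t) →
        HasDerivAt
          (fun s : ℝ => actionA n α H F (fun t => (fun _ : ℝ => x₀) t + s • η t)) 0 0) := by
  constructor
  · intro t
    simp [deriv_const]
  intro η hη hper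
  have hηd : Differentiable ℝ η := hη.differentiable (by simp)
  have hηc : Continuous η := hη.continuous
  have hη'c : Continuous (deriv η) := hη.continuous_deriv (by simp)
  have hfH : fderiv ℝ H x₀ = 0 := by
    unfold gradient at hx₀
    simpa using congrArg (InnerProductSpace.toDual ℝ (Phase n)) hx₀
  -- the second integrand, as a smooth function of (s, t)
  set g : ℝ × ℝ → ℝ := fun p => H (x₀ + p.1 • η (p.2 + α * F (x₀ + p.1 • η p.2))) with hg_def
  have hψ : ContDiff ℝ (⊤ : ℕ∞) (fun p : ℝ × ℝ => x₀ + p.1 • η (p.2 + α * F (x₀ + p.1 • η p.2))) := by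
    have h1 : ContDiff ℝ (⊤ : ℕ∞) (fun p : ℝ × ℝ => x₀ + p.1 • η p.2) :=
      contDiff_const.add (contDiff_fst.smul (hη.comp contDiff_snd))
    have h2 : ContDiff ℝ (⊤ : ℕ∞) (fun p : ℝ × ℝ => p.2 + α * F (x₀ + p.1 • η p.2)) :=
      contDiff_snd.add (contDiff_const.mul (hF.comp h1))
    exact contDiff_const.add (contDiff_fst.smul (hη.comp h2))
  have hg : ContDiff ℝ (⊤ : ℕ∞) g := hH.comp hψ
  have hgd : Differentiable ℝ g := hg.differentiable (by simp)
  set D : ℝ × ℝ → ℝ := fun p => fderiv ℝ g p (1, 0) with hD_def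
  have hDc : Continuous D := (hg.continuous_fderiv (by simp)).clm_apply continuous_const
  have hline : ∀ (s t : ℝ), HasDerivAt (fun x : ℝ => (x, t)) ((1 : ℝ), (0 : ℝ)) s := fun s t =>
    (hasDerivAt_id s).prodMk (hasDerivAt_const s t)
  have hDs : ∀ (s t : ℝ), HasDerivAt (fun x : ℝ => g (x, t)) (D (s, t)) s := fun s t =>
    (((hgd (s, t)).hasFDerivAt).comp_hasDerivAt s (hline s t) :)
  have hD0 : ∀ t : ℝ, D (0, t) = 0 := by
    intro t
    have hψ0 : (fun p : ℝ × ℝ => x₀ + p.1 • η (p.2 + α * F (x₀ + p.1 • η p.2))) (0, t) = x₀ := by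
      simp
    have hcomp := fderiv_comp (𝕜 := ℝ) (0, t)
      (hH.differentiable (by simp) _)
      (hψ.differentiable (by simp) (0, t))
    rw [hD_def]
    show fderiv ℝ ((fun z => H z) ∘
      (fun p : ℝ × ℝ => x₀ + p.1 • η (p.2 + α * F (x₀ + p.1 • η p.2)))) (0, t) (1, 0) = 0
    rw [hcomp]
    simp [hfH]
  -- bound on D on a compact neighborhood
  obtain ⟨C, hC⟩ : ∃ C, ∀ p ∈ (Set.Icc (-1 : ℝ) 1 ×ˢ Set.Icc (-1 : ℝ) 1), ‖D p‖ ≤ C :=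
    (isCompact_Icc.prod isCompact_Icc).exists_bound_of_continuousOn hDc.continuousOn
  -- derivative of the second integral
  have hT2 : HasDerivAt (fun s : ℝ => ∫ t in (0:ℝ)..1, g (s, t)) 0 0 := by
    have key := intervalIntegral.hasDerivAt_integral_of_dominated_loc_of_deriv_le
      (F := fun s t => g (s, t)) (F' := fun s t => D (s, t)) (x₀ := (0 : ℝ))
      (a := (0:ℝ)) (b := 1) (μ := MeasureTheory.volume) (bound := fun _ => C)
      (s := Metric.ball (0:ℝ) 1) (Metric.ball_mem_nhds (0:ℝ) one_pos)
      (Filter.Eventually.of_forall fun s =>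
        ((hg.continuous.comp (continuous_const.prodMk continuous_id)).aestronglyMeasurable))
      ((hg.continuous.comp (continuous_const.prodMk continuous_id)).intervalIntegrable 0 1)
      ((hDc.comp (continuous_const.prodMk continuous_id)).aestronglyMeasurable)
      (Filter.Eventually.of_forall fun t ht s hs => by
        refine hC (s, t) ⟨?_, ?_⟩
        · have := Metric.mem_ball.mp hs
          rw [Real.dist_eq, sub_zero] at this
          exact ⟨by linarith [abs_le.mp this.le], by linarith [abs_le.mp this.le]⟩
        · rcases Set.mem_uIoc.mp ht with h | h
          · exact ⟨by linarith [h.1], h.2⟩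
          · exact ⟨by linarith [h.2], by linarith [h.1]⟩)
      (intervalIntegrable_const)
      (Filter.Eventually.of_forall fun t ht s hs => hDs s t)
    have h0 : (∫ t in (0:ℝ)..1, D (0, t)) = 0 := by
      simp [hD0]
    simpa [h0] using key.2
  -- first integral: expand
  set a : ℝ → ℝ := fun t => (inner ℝ (Jstd n x₀) (deriv η t) : ℝ) with ha_def
  set b : ℝ → ℝ := fun t => (inner ℝ (Jstd n (η t)) (deriv η t) : ℝ) with hb_def
  have hac : Continuous a := by
    simp only [ha_def, Jstd_eq]
    exact (continuous_const.inner hη'c)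
  have hbc : Continuous b := by
    simp only [hb_def, Jstd_eq]
    exact ((JL n).continuous.comp hηc).inner hη'c
  have hA0 : (∫ t in (0:ℝ)..1, a t) = 0 := by
    have hderiv : ∀ t ∈ Set.uIcc (0:ℝ) 1,
        HasDerivAt (fun u => (inner ℝ (Jstd n x₀) (η u) : ℝ)) (a t) t := by
      intro t _
      simp only [ha_def, Jstd_eq]
      have := (innerSL ℝ (JL n x₀)).hasFDerivAt.comp_hasDerivAt t (hηd t).hasDerivAt
      simpa [Function.comp_def] using this
    rw [intervalIntegral.integral_eq_sub_of_hasDerivAt hderiv (hac.intervalIntegrable 0 1)]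
    have : η 1 = η 0 := by simpa using hper 0
    simp [this]
  -- pointwise identity for the action along the path
  have hkey : ∀ s : ℝ, actionA n α H F (fun t => (fun _ : ℝ => x₀) t + s • η t) =
      (1 / 2) * (s * (∫ t in (0:ℝ)..1, a t) + s ^ 2 * ∫ t in (0:ℝ)..1, b t) -
        ∫ t in (0:ℝ)..1, g (s, t) := by
    intro s
    have hw : ∀ t : ℝ, deriv (fun t => x₀ + s • η t) t = s • deriv η t := by
      intro t
      have := ((hasDerivAt_const t x₀).add ((hηd t).hasDerivAt.const_smul s)).deriv
      rw [zero_add] at this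
      exact this
    unfold actionA
    congr 1
    · congr 1
      have h1 : ∀ t : ℝ, (inner ℝ (Jstd n (x₀ + s • η t)) (deriv (fun t => x₀ + s • η t) t) : ℝ)
          = s * a t + s ^ 2 * b t := by
        intro t
        rw [hw t]
        simp only [ha_def, hb_def, Jstd_eq, map_add, map_smul]
        rw [inner_add_left, real_inner_smul_left, real_inner_smul_right,
          real_inner_smul_right]
        ring
      rw [intervalIntegral.integral_congr (g := fun t => s * a t + s ^ 2 * b t)
        (fun t _ => h1 t)]
      rw [intervalIntegral.integral_add (f := fun t => s * a t) (g := fun t => s ^ 2 * b t)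
        ((continuous_const.mul hac).intervalIntegrable 0 1)
        ((continuous_const.mul hbc).intervalIntegrable 0 1),
        intervalIntegral.integral_const_mul, intervalIntegral.integral_const_mul]
  -- conclude
  have hmain : HasDerivAt (fun s : ℝ =>
      (1 / 2) * (s * (∫ t in (0:ℝ)..1, a t) + s ^ 2 * ∫ t in (0:ℝ)..1, b t) -
        ∫ t in (0:ℝ)..1, g (s, t)) 0 0 := by
    have h1 : HasDerivAt (fun s : ℝ => s * (∫ t in (0:ℝ)..1, a t)) (∫ t in (0:ℝ)..1, a t) 0 :=
      hasDerivAt_mul_const _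
    have h2 : HasDerivAt (fun s : ℝ => s ^ 2 * ∫ t in (0:ℝ)..1, b t) 0 0 := by
      have := (hasDerivAt_pow 2 (0:ℝ)).mul_const (∫ t in (0:ℝ)..1, b t)
      simpa using this
    have := ((h1.add h2).const_mul (1/2 : ℝ)).sub hT2
    simpa [hA0, Pi.sub_def] using this
  exact hmain.congr_of_eventuallyEq (Filter.Eventually.of_forall fun s => hkey s)
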